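/- arXiv:1410.5276 — 5 statements merged into one kernel-verified Lean document; each statement's English description precedes it below -/
import Mathlib

section
/- Let G be a group, H a complex inner product space, U : G →* (H →ₗᵢ[ℂ] H) a unitary representation, I a type equipped with a G-action, and (W_i)_{i∈I} a family of pairwise orthogonal subspaces of H such that U_f maps W_i into W_{f·i} for all f ∈ G and i ∈ I. Fix i₀ ∈ I, let T be a subgroup of G contained in the stabilizer of i₀, with U_t Ψ = Ψ for all t ∈ T, where Ψ ∈ W_{i₀}, and assume T has finite index in the stabilizer Stab_G(i₀). Then for every finite subset F ⊆ I and every Ψ' lying in the (algebraic) sum of the subspaces W_j, j ∈ F, the set of left cosets [f] ∈ G ⧸ T for which ⟪U_fΨ, Ψ'⟫ ≠ 0 is finite. -/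
/-!
A coset `[f]` can only contribute if `U_f Ψ ∈ W (f • i₀)` is not orthogonal to `Ψ'`, i.e. if
`f • i₀ ∈ F`. Via `G ⧸ T ≃ (G ⧸ Stab i₀) × (Stab i₀ ⧸ T)` and the orbit embedding
`G ⧸ Stab i₀ ↪ I`, only finitely many cosets of `T` send `i₀` into the finite set `F`.
-/

open MulAction

theorem Submodule.inner_eq_zero_of_mem_biSup {𝕜 E ι : Type*} [RCLike 𝕜] [NormedAddCommGroup E]
    [InnerProductSpace 𝕜 E] {W : ι → Submodule 𝕜 E}
    (horth : ∀ i j : ι, i ≠ j → ∀ v ∈ W i, ∀ w ∈ W j, inner 𝕜 v w = 0)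
    {i : ι} {s : Set ι} (hi : i ∉ s) {v w : E} (hv : v ∈ W i) (hw : w ∈ ⨆ j ∈ s, W j) :
    inner 𝕜 v w = 0 := by
  have hle : (⨆ j ∈ s, W j) ≤ (W i)ᗮ := iSup₂_le fun j hj w hw =>
    (Submodule.mem_orthogonal _ _).2 fun u hu => horth i j (ne_of_mem_of_not_mem hj hi).symm u hu w hw
  exact Submodule.inner_right_of_mem_orthogonal hv (hle hw)

theorem MulAction.finite_quotient_smul_mem {G I : Type*} [Group G] [MulAction G I] {i₀ : I}
    {T : Subgroup G} (hT : T ≤ stabilizer G i₀) [(T.subgroupOf (stabilizer G i₀)).FiniteIndex]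
    {s : Set I} (hs : s.Finite) :
    {q : G ⧸ T | ∃ f : G, (f : G ⧸ T) = q ∧ f • i₀ ∈ s}.Finite := by
  have : Finite (stabilizer G i₀ ⧸ T.subgroupOf (stabilizer G i₀)) :=
    Subgroup.finite_quotient_of_finiteIndex
  let e := Subgroup.quotientEquivProdOfLE hT
  have horbit : (ofQuotientStabilizer G i₀ ⁻¹' s).Finite :=
    hs.preimage (injective_ofQuotientStabilizer G i₀).injOn
  refine ((horbit.prod Set.finite_univ).preimage e.injective.injOn).subset ?_
  rintro _ ⟨f, rfl, hf⟩
  exact ⟨hf, trivial⟩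

theorem stmt_1_general {G H I : Type*} [Group G] [NormedAddCommGroup H] [InnerProductSpace ℂ H]
    [MulAction G I]
    (U : G →* (H ≃ₗᵢ[ℂ] H)) (W : I → Submodule ℂ H)
    (horth : ∀ i j : I, i ≠ j → ∀ v ∈ W i, ∀ w ∈ W j, inner (𝕜 := ℂ) v w = 0)
    (hmap : ∀ (f : G) (i : I), ∀ v ∈ W i, (U f) v ∈ W (f • i))
    (i₀ : I) (T : Subgroup G) (hT : T ≤ MulAction.stabilizer G i₀)
    (hfin : (T.subgroupOf (MulAction.stabilizer G i₀)).FiniteIndex)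
    (Ψ : H) (hΨW : Ψ ∈ W i₀) :
    ∀ (F : Finset I) (Ψ' : H), Ψ' ∈ (⨆ j ∈ F, W j) →
      {q : G ⧸ T | ∃ f : G, QuotientGroup.mk f = q ∧
        inner (𝕜 := ℂ) ((U f) Ψ) Ψ' ≠ 0}.Finite := by
  intro F Ψ' hΨ'
  refine (finite_quotient_smul_mem hT F.finite_toSet).subset ?_
  rintro _ ⟨f, rfl, hne⟩
  refine ⟨f, rfl, ?_⟩
  by_contra hf
  exact hne (Submodule.inner_eq_zero_of_mem_biSup horth hf (hmap f i₀ Ψ hΨW) hΨ')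

/-- Only finitely many cosets `[f] ∈ G ⧸ T` give a nonzero matrix element
`⟪U_f Ψ, Ψ'⟫` when `Ψ` lies in a subspace `W i₀` of a pairwise-orthogonal,
`G`-covariant family of subspaces, `T` has finite index in the stabilizer of `i₀`,
and `Ψ'` lies in a finite algebraic sum of the subspaces. -/
theorem stmt_1 {G H I : Type*} [Group G] [NormedAddCommGroup H] [InnerProductSpace ℂ H]
    [MulAction G I]
    (U : G →* (H ≃ₗᵢ[ℂ] H)) (W : I → Submodule ℂ H)
    (horth : ∀ i j : I, i ≠ j → ∀ v ∈ W i, ∀ w ∈ W j, inner (𝕜 := ℂ) v w = 0)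
    (hmap : ∀ (f : G) (i : I), ∀ v ∈ W i, (U f) v ∈ W (f • i))
    (i₀ : I) (T : Subgroup G) (hT : T ≤ MulAction.stabilizer G i₀)
    (hfin : (T.subgroupOf (MulAction.stabilizer G i₀)).FiniteIndex)
    (Ψ : H) (hΨW : Ψ ∈ W i₀) (hΨ : ∀ t ∈ T, U t Ψ = Ψ) :
    ∀ (F : Finset I) (Ψ' : H), Ψ' ∈ (⨆ j ∈ F, W j) →
      {q : G ⧸ T | ∃ f : G, QuotientGroup.mk f = q ∧
        inner (𝕜 := ℂ) ((U f) Ψ) Ψ' ≠ 0}.Finite :=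
  stmt_1_general U W horth hmap i₀ T hT hfin Ψ hΨW
end

section
/- Let G be a group, H a complex inner product space, U : G →* (H →ₗᵢ[ℂ] H) a unitary representation, and T ≤ S ≤ G subgroups with T of finite index n in S. Let Ψ, Ψ' ∈ H satisfy U_sΨ = Ψ and U_sΨ' = Ψ' for all s ∈ S, and suppose ⟪U_fΨ, Ψ'⟫ = 0 for every f ∈ G with f ∉ S. Then the function [f] ↦ ⟪U_fΨ, Ψ'⟫ on G ⧸ T has finite support and ∑ᶠ_{[f] ∈ G⧸T} ⟪U_fΨ, Ψ'⟫ = n · ⟪Ψ, Ψ'⟫. -/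
/-!
The cosets `fT` with `f ∈ S` form the orbit of `T` under `S` acting on `G ⧸ T`, whose
stabilizer is `T ∩ S`; by orbit–stabilizer it has `[S : T] = n` elements. Since `Ψ` is
`S`-invariant, the pairing equals `⟪Ψ, Ψ'⟫` on that orbit and vanishes off it by hypothesis,
so the averaged sum counts the orbit with weight `⟪Ψ, Ψ'⟫`.
-/

open MulAction

theorem Set.finsum_indicator_const {α M : Type*} [AddCommMonoid M] {A : Set α}
    (hA : A.Finite) (c : M) : ∑ᶠ a, A.indicator (fun _ => c) a = A.ncard • c := by
  rw [← finsum_mem_def, finsum_mem_eq_finite_toFinset_sum _ hA, Finset.sum_const,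
    Set.ncard_eq_toFinset_card _ hA]

namespace QuotientGroup

variable {G : Type*} [Group G] {T S : Subgroup G}

theorem subgroup_smul_mk_one (s : S) : s • ((1 : G) : G ⧸ T) = ((s : G) : G ⧸ T) :=
  congrArg QuotientGroup.mk (mul_one (s : G))

theorem ncard_orbit_one_eq_relIndex :
    (orbit S ((1 : G) : G ⧸ T)).ncard = T.relIndex S := by
  have hstab : stabilizer S ((1 : G) : G ⧸ T) = T.subgroupOf S := by
    ext s
    rw [mem_stabilizer_iff, subgroup_smul_mk_one, eq_comm, QuotientGroup.eq, inv_one, one_mul,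
      Subgroup.mem_subgroupOf]
  rw [Subgroup.relIndex, ← hstab, index_stabilizer]

theorem out_mem_iff_mem_orbit_one (hTS : T ≤ S) (q : G ⧸ T) :
    q.out ∈ S ↔ q ∈ orbit S ((1 : G) : G ⧸ T) := by
  constructor
  · intro hq
    exact ⟨⟨q.out, hq⟩, (subgroup_smul_mk_one _).trans (QuotientGroup.out_eq' q)⟩
  · rintro ⟨s, rfl⟩
    have hrep : (s : G)⁻¹ * (s • ((1 : G) : G ⧸ T)).out ∈ T := by
      rw [← QuotientGroup.eq, QuotientGroup.out_eq', subgroup_smul_mk_one]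
    simpa using S.mul_mem s.2 (hTS hrep)

end QuotientGroup

theorem stmt_5_general {G H : Type*} [Group G] [NormedAddCommGroup H] [InnerProductSpace ℂ H]
    (U : G →* (H ≃ₗᵢ[ℂ] H)) (T S : Subgroup G) (hTS : T ≤ S) (n : ℕ)
    (hn : T.relIndex S = n) (hn0 : n ≠ 0)
    (Ψ Ψ' : H) (hΨ : ∀ s ∈ S, U s Ψ = Ψ)
    (hvanish : ∀ f : G, f ∉ S → inner (𝕜 := ℂ) ((U f) Ψ) Ψ' = 0) :
    (Function.support fun q : G ⧸ T =>
        inner (𝕜 := ℂ) ((U (Quotient.out q)) Ψ) Ψ').Finite ∧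
    (∑ᶠ q : G ⧸ T, inner (𝕜 := ℂ) ((U (Quotient.out q)) Ψ) Ψ') =
      (n : ℂ) * inner (𝕜 := ℂ) Ψ Ψ' := by
  set A := orbit S ((1 : G) : G ⧸ T)
  have hA_card : A.ncard = n := QuotientGroup.ncard_orbit_one_eq_relIndex.trans hn
  have hA : A.Finite := Set.finite_of_ncard_ne_zero (hA_card ▸ hn0)
  have hpairing : (fun q : G ⧸ T => inner ℂ (U q.out Ψ) Ψ') =
      A.indicator fun _ => inner ℂ Ψ Ψ' := by
    funext q
    by_cases hq : q.out ∈ S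
    · rw [Set.indicator_of_mem ((QuotientGroup.out_mem_iff_mem_orbit_one hTS q).1 hq), hΨ _ hq]
    · rw [Set.indicator_of_notMem (mt (QuotientGroup.out_mem_iff_mem_orbit_one hTS q).2 hq),
        hvanish _ hq]
  rw [hpairing, Set.finsum_indicator_const hA, hA_card, nsmul_eq_mul]
  exact ⟨hA.subset (Set.support_indicator_subset), rfl⟩

/-- If `Ψ, Ψ'` are fixed by a subgroup `S`, `T ≤ S` has finite index `n` in `S`, and
`⟪U_f Ψ, Ψ'⟫ = 0` for `f ∉ S`, then the averaged pairing over `G ⧸ T` is a finite sum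
equal to `n ⟪Ψ, Ψ'⟫`. -/
theorem stmt_5 {G H : Type*} [Group G] [NormedAddCommGroup H] [InnerProductSpace ℂ H]
    (U : G →* (H ≃ₗᵢ[ℂ] H)) (T S : Subgroup G) (hTS : T ≤ S) (n : ℕ)
    (hn : T.relIndex S = n) (hn0 : n ≠ 0)
    (Ψ Ψ' : H) (hΨ : ∀ s ∈ S, U s Ψ = Ψ) (hΨ' : ∀ s ∈ S, U s Ψ' = Ψ')
    (hvanish : ∀ f : G, f ∉ S → inner (𝕜 := ℂ) ((U f) Ψ) Ψ' = 0) :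
    (Function.support fun q : G ⧸ T =>
        inner (𝕜 := ℂ) ((U (Quotient.out q)) Ψ) Ψ').Finite ∧
    (∑ᶠ q : G ⧸ T, inner (𝕜 := ℂ) ((U (Quotient.out q)) Ψ) Ψ') =
      (n : ℂ) * inner (𝕜 := ℂ) Ψ Ψ' :=
  stmt_5_general U T S hTS n hn hn0 Ψ Ψ' hΨ hvanish
end

section
/- Let G be a group, H a complex inner product space, U : G →* (H →ₗᵢ[ℂ] H) a unitary representation, and T ≤ S ≤ G subgroups with T of finite index n ≥ 1 in S. Let Ψ ∈ H satisfy U_sΨ = Ψ for all s ∈ S, and suppose ⟪U_fΨ, Ψ⟫ = 0 for every f ∈ G with f ∉ S. Then ∑ᶠ_{[f] ∈ G⧸T} ⟪U_fΨ, Ψ⟫ = n · ‖Ψ‖² ; in particular this sum is a nonnegative real number, and it vanishes if and only if Ψ = 0. -/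
open Set

/-! Since `T ≤ S`, a coset `fT` lies in `S` exactly when `f ∈ S`, and there are `n` such
cosets. By `S`-invariance each of them contributes `⟪Ψ, Ψ⟫ = ‖Ψ‖²` to the sum, and all
other cosets contribute `0`. -/

theorem finsum_const_eq_card_smul {α M : Type*} [AddCommMonoid M] (c : M) :
    ∑ᶠ _ : α, c = Nat.card α • c := by
  cases finite_or_infinite α
  · have := Fintype.ofFinite α
    rw [finsum_eq_sum_of_fintype, Finset.sum_const, Finset.card_univ, Nat.card_eq_fintype_card]
  · by_cases hc : c = 0
    · simp [hc]
    · rw [Nat.card_eq_zero_of_infinite, zero_smul, finsum_of_infinite_support]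
      simpa [Function.support_const hc] using infinite_univ

namespace Subgroup

variable {G : Type*} [Group G]

def quotientSubgroupOfEmbedding (T S : Subgroup G) : S ⧸ T.subgroupOf S ↪ G ⧸ T where
  toFun := Quotient.map' Subtype.val fun _ _ h => by
    simpa [QuotientGroup.leftRel_apply, mem_subgroupOf] using h
  inj' := Quotient.ind₂' fun a b h => by
    simpa [QuotientGroup.eq, mem_subgroupOf] using h

theorem range_quotientSubgroupOfEmbedding {T S : Subgroup G} (hTS : T ≤ S) :
    range (quotientSubgroupOfEmbedding T S) = {q | q.out ∈ S} := by
  ext q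
  constructor
  · rintro ⟨a, rfl⟩
    induction a using QuotientGroup.induction_on with
    | H s =>
      change (QuotientGroup.mk (s : G) : G ⧸ T).out ∈ S
      have hs : (s : G)⁻¹ * (QuotientGroup.mk (s : G) : G ⧸ T).out ∈ S :=
        hTS (QuotientGroup.eq.mp (QuotientGroup.out_eq' _).symm)
      simpa using S.mul_mem s.2 hs
  · intro hq
    exact ⟨QuotientGroup.mk ⟨q.out, hq⟩, QuotientGroup.out_eq' q⟩

theorem finsum_quotient_out_eq_relIndex_smul {M : Type*} [AddCommMonoid M]
    {T S : Subgroup G} (hTS : T ≤ S) (φ : G → M) (c : M) (hS : ∀ s ∈ S, φ s = c)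
    (hnS : ∀ g ∉ S, φ g = 0) :
    ∑ᶠ q : G ⧸ T, φ q.out = T.relIndex S • c := by
  calc ∑ᶠ q : G ⧸ T, φ q.out
      = ∑ᶠ q ∈ {q : G ⧸ T | q.out ∈ S}, c := by
        rw [finsum_mem_def]
        congr 1 with q
        by_cases hq : q.out ∈ S <;> simp [hq, hS, hnS]
    _ = ∑ᶠ _ : S ⧸ T.subgroupOf S, c := by
        rw [← range_quotientSubgroupOfEmbedding hTS,
          finsum_mem_range (quotientSubgroupOfEmbedding T S).injective]
    _ = T.relIndex S • c := finsum_const_eq_card_smul c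

end Subgroup

/-- Positivity of the averaged norm: under the assumptions of the unitary-embedding lemma,
`∑ᶠ_{[f] ∈ G⧸T} ⟪U_f Ψ, Ψ⟫ = n ‖Ψ‖²`, a nonnegative real number vanishing iff `Ψ = 0`. -/
theorem stmt_6 {G H : Type*} [Group G] [NormedAddCommGroup H] [InnerProductSpace ℂ H]
    (U : G →* (H ≃ₗᵢ[ℂ] H)) (T S : Subgroup G) (hTS : T ≤ S) (n : ℕ)
    (hn : T.relIndex S = n) (hn1 : 1 ≤ n)
    (Ψ : H) (hΨ : ∀ s ∈ S, U s Ψ = Ψ)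
    (hvanish : ∀ f : G, f ∉ S → inner (𝕜 := ℂ) ((U f) Ψ) Ψ = 0) :
    ((∑ᶠ q : G ⧸ T, inner (𝕜 := ℂ) ((U (Quotient.out q)) Ψ) Ψ) =
        (n : ℂ) * ((‖Ψ‖ ^ 2 : ℝ) : ℂ)) ∧
    (((∑ᶠ q : G ⧸ T, inner (𝕜 := ℂ) ((U (Quotient.out q)) Ψ) Ψ) : ℂ).re ≥ 0) ∧
    (((∑ᶠ q : G ⧸ T, inner (𝕜 := ℂ) ((U (Quotient.out q)) Ψ) Ψ) : ℂ).im = 0) ∧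
    ((∑ᶠ q : G ⧸ T, inner (𝕜 := ℂ) ((U (Quotient.out q)) Ψ) Ψ) = 0 ↔ Ψ = 0) := by
  have hsum : ∑ᶠ q : G ⧸ T, inner (𝕜 := ℂ) ((U (Quotient.out q)) Ψ) Ψ =
      (n : ℂ) * ((‖Ψ‖ ^ 2 : ℝ) : ℂ) := by
    have hS : ∀ s ∈ S, inner ℂ (U s Ψ) Ψ = ((‖Ψ‖ ^ 2 : ℝ) : ℂ) := fun s hs => by
      rw [hΨ s hs, inner_self_eq_norm_sq_to_K]
      norm_cast
    rw [Subgroup.finsum_quotient_out_eq_relIndex_smul hTS _ _ hS hvanish, hn, nsmul_eq_mul]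
  have hreal : (n : ℂ) * ((‖Ψ‖ ^ 2 : ℝ) : ℂ) = ((n * ‖Ψ‖ ^ 2 : ℝ) : ℂ) := by
    push_cast
    rfl
  refine ⟨hsum, ?_⟩
  rw [hsum, hreal, Complex.ofReal_re, Complex.ofReal_im]
  refine ⟨by positivity, rfl, ?_⟩
  simp [Complex.ofReal_eq_zero, show n ≠ 0 by omega]
end

section
/- Let G be a group, H a complex inner product space, U : G →* (H →ₗᵢ[ℂ] H) a unitary representation, T ≤ G a subgroup, and Ψ, Ψ' elements of H with U_tΨ = Ψ and U_tΨ' = Ψ' for all t ∈ T. Fix f₀ ∈ G and let T' := f₀ T f₀⁻¹ be the conjugate subgroup. Then: (i) U_{t'}(U_{f₀}Ψ) = U_{f₀}Ψ for every t' ∈ T'; and (ii) assuming the relevant functions on coset spaces have finite support, ∑ᶠ_{[g] ∈ G⧸T'} ⟪U_g(U_{f₀}Ψ), U_{f₀}Ψ'⟫ = ∑ᶠ_{[f] ∈ G⧸T} ⟪U_fΨ, Ψ'⟫. In other words, the induced map η(Ψ) ↦ η(U_{f₀}Ψ) preserves the averaged scalar products. -/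
/-!
Unitarity of `U f₀` turns the summand `⟪U g (U f₀ Ψ), U f₀ Ψ'⟫` into `⟪U (f₀⁻¹ g f₀) Ψ, Ψ'⟫`.
Since `Ψ` is `T`-invariant, `g ↦ ⟪U g Ψ, Ψ'⟫` is constant on left `T`-cosets, and conjugation
by `f₀⁻¹` is a bijection `G ⧸ f₀ T f₀⁻¹ ≃ G ⧸ T`, so the two sums agree term by term.
-/

namespace QuotientGroup

variable {G N M : Type*} [Group G] [Group N] [AddCommMonoid M]

def quotientMapEquiv (e : G ≃* N) (T : Subgroup G) : G ⧸ T ≃ N ⧸ T.map e.toMonoidHom :=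
  Quotient.congr e.toEquiv fun a b => by
    rw [leftRel_apply, leftRel_apply, Subgroup.mem_map_equiv]
    simp

theorem quotientMapEquiv_mk (e : G ≃* N) (T : Subgroup G) (g : G) :
    quotientMapEquiv e T (g : G ⧸ T) = ((e g : N) : N ⧸ T.map e.toMonoidHom) :=
  rfl

theorem apply_out_mk_eq {X : Type*} {T : Subgroup G} {F : G → X}
    (hF : ∀ g, ∀ t ∈ T, F (g * t) = F g) (g : G) : F (g : G ⧸ T).out = F g := by
  obtain ⟨t, ht⟩ := mk_out_eq_mul T g
  rw [ht, hF g t t.2]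

theorem finsum_apply_symm_out_map_equiv (e : G ≃* N) {T : Subgroup G} {F : G → M}
    (hF : ∀ g, ∀ t ∈ T, F (g * t) = F g) :
    ∑ᶠ q : N ⧸ T.map e.toMonoidHom, F (e.symm q.out) = ∑ᶠ q : G ⧸ T, F q.out := by
  have hFe : ∀ n, ∀ t ∈ T.map e.toMonoidHom, (F ∘ e.symm) (n * t) = (F ∘ e.symm) n := by
    intro n t ht
    rw [Function.comp_apply, map_mul, hF _ _ (Subgroup.mem_map_equiv.mp ht), Function.comp_apply]
  rw [← finsum_comp_equiv (quotientMapEquiv e T)]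
  congr 1 with q
  induction q using QuotientGroup.induction_on with
  | H g =>
    rw [quotientMapEquiv_mk, apply_out_mk_eq hF]
    simpa using apply_out_mk_eq hFe (e g)

end QuotientGroup

section UnitaryRepresentation

variable {G : Type*} [Group G]

theorem LinearIsometryEquiv.apply_eq_of_mem_map_conj {R E : Type*} [Semiring R]
    [SeminormedAddCommGroup E] [Module R E] (U : G →* (E ≃ₗᵢ[R] E)) {T : Subgroup G} {Ψ : E}
    (hΨ : ∀ t ∈ T, U t Ψ = Ψ) (f : G) :
    ∀ t' ∈ T.map (MulAut.conj f).toMonoidHom, U t' (U f Ψ) = U f Ψ := by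
  rintro _ ⟨t, ht, rfl⟩
  have hconj : (MulAut.conj f).toMonoidHom t * f = f * t := by simp [MulAut.conj_apply]
  simpa only [map_mul, LinearIsometryEquiv.coe_mul, Function.comp_apply, hΨ t ht] using
    congrArg (fun g => U g Ψ) hconj

variable {𝕜 H : Type*} [RCLike 𝕜] [NormedAddCommGroup H] [InnerProductSpace 𝕜 H]
  (U : G →* (H ≃ₗᵢ[𝕜] H))

theorem LinearIsometryEquiv.inner_map_apply_map (f g : G) (Ψ Ψ' : H) :
    inner 𝕜 (U g (U f Ψ)) (U f Ψ') = inner 𝕜 (U (f⁻¹ * g * f) Ψ) Ψ' := by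
  rw [← (U f).inner_map_map (U (f⁻¹ * g * f) Ψ)]
  simp only [map_mul, map_inv, LinearIsometryEquiv.coe_mul, LinearIsometryEquiv.coe_inv,
    Function.comp_apply, LinearIsometryEquiv.apply_symm_apply]

theorem LinearIsometryEquiv.inner_map_mul_apply {T : Subgroup G} {Ψ : H}
    (hΨ : ∀ t ∈ T, U t Ψ = Ψ) (Ψ' : H) (g : G) (t : G) (ht : t ∈ T) :
    inner 𝕜 (U (g * t) Ψ) Ψ' = inner 𝕜 (U g Ψ) Ψ' := by
  rw [map_mul, LinearIsometryEquiv.coe_mul, Function.comp_apply, hΨ t ht]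

end UnitaryRepresentation

theorem stmt_8_general {G H : Type*} [Group G] [NormedAddCommGroup H] [InnerProductSpace ℂ H]
    (U : G →* (H ≃ₗᵢ[ℂ] H)) (T : Subgroup G) (Ψ Ψ' : H)
    (hΨ : ∀ t ∈ T, U t Ψ = Ψ)
    (f₀ : G) (T' : Subgroup G)
    (hT' : T' = Subgroup.map (MulAut.conj f₀).toMonoidHom T) :
    (∀ t' ∈ T', U t' ((U f₀) Ψ) = (U f₀) Ψ) ∧
    ((Function.support fun q : G ⧸ T' =>
        inner (𝕜 := ℂ) ((U (Quotient.out q)) ((U f₀) Ψ)) ((U f₀) Ψ')).Finite →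
      (Function.support fun q : G ⧸ T =>
        inner (𝕜 := ℂ) ((U (Quotient.out q)) Ψ) Ψ').Finite →
      (∑ᶠ q : G ⧸ T', inner (𝕜 := ℂ) ((U (Quotient.out q)) ((U f₀) Ψ)) ((U f₀) Ψ')) =
        ∑ᶠ q : G ⧸ T, inner (𝕜 := ℂ) ((U (Quotient.out q)) Ψ) Ψ') := by
  subst hT'
  refine ⟨LinearIsometryEquiv.apply_eq_of_mem_map_conj U hΨ f₀, fun _ _ => ?_⟩
  simp only [LinearIsometryEquiv.inner_map_apply_map, ← MulAut.conj_symm_apply]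
  exact QuotientGroup.finsum_apply_symm_out_map_equiv (MulAut.conj f₀)
    (F := fun g => inner ℂ (U g Ψ) Ψ') (LinearIsometryEquiv.inner_map_mul_apply U hΨ Ψ')

/-- The action of `U_{f₀}` on averaged states: `U_{f₀}Ψ` is fixed by the conjugate
subgroup `T' = f₀ T f₀⁻¹`, and the averaged scalar product over `G ⧸ T'` of the
translated vectors equals the averaged scalar product over `G ⧸ T` of the original ones. -/
theorem stmt_8 {G H : Type*} [Group G] [NormedAddCommGroup H] [InnerProductSpace ℂ H]
    (U : G →* (H ≃ₗᵢ[ℂ] H)) (T : Subgroup G) (Ψ Ψ' : H)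
    (hΨ : ∀ t ∈ T, U t Ψ = Ψ) (hΨ' : ∀ t ∈ T, U t Ψ' = Ψ')
    (f₀ : G) (T' : Subgroup G)
    (hT' : T' = Subgroup.map (MulAut.conj f₀).toMonoidHom T) :
    (∀ t' ∈ T', U t' ((U f₀) Ψ) = (U f₀) Ψ) ∧
    ((Function.support fun q : G ⧸ T' =>
        inner (𝕜 := ℂ) ((U (Quotient.out q)) ((U f₀) Ψ)) ((U f₀) Ψ')).Finite →
      (Function.support fun q : G ⧸ T =>
        inner (𝕜 := ℂ) ((U (Quotient.out q)) Ψ) Ψ').Finite →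
      (∑ᶠ q : G ⧸ T', inner (𝕜 := ℂ) ((U (Quotient.out q)) ((U f₀) Ψ)) ((U f₀) Ψ')) =
        ∑ᶠ q : G ⧸ T, inner (𝕜 := ℂ) ((U (Quotient.out q)) Ψ) Ψ') :=
  stmt_8_general U T Ψ Ψ' hΨ f₀ T' hT'
end

section
/- Let G be a group, H a complex Hilbert space, U : G →* (H →ₗᵢ[ℂ] H) a unitary representation, T ≤ G a subgroup, and Ψ ∈ H with U_tΨ = Ψ for all t ∈ T. Let A : H →L[ℂ] H be a bounded linear operator commuting with the representation: A ∘ U_f = U_f ∘ A for every f ∈ G. Then the adjoint A† also commutes with U_f for every f ∈ G, the vector A†Ψ satisfies U_t(A†Ψ) = A†Ψ for all t ∈ T, and for every Ψ' ∈ H (assuming the function [f] ↦ ⟪U_fΨ, AΨ'⟫ on G⧸T has finite support) one has ∑ᶠ_{[f] ∈ G⧸T} ⟪U_f(A†Ψ), Ψ'⟫ = ∑ᶠ_{[f] ∈ G⧸T} ⟪U_fΨ, AΨ'⟫ ; i.e. the dual operator maps the averaged state η(Ψ) to the averaged state η(A†Ψ). -/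
open ContinuousLinearMap

/-- Since unitaries satisfy `V† = V⁻¹`, taking adjoints of `A V = W A` gives `V⁻¹ A† = A† W⁻¹`. -/
theorem ContinuousLinearMap.adjoint_apply_map_of_intertwines {𝕜 E F : Type*} [RCLike 𝕜]
    [NormedAddCommGroup E] [InnerProductSpace 𝕜 E] [CompleteSpace E]
    [NormedAddCommGroup F] [InnerProductSpace 𝕜 F] [CompleteSpace F]
    (V : E ≃ₗᵢ[𝕜] E) (W : F ≃ₗᵢ[𝕜] F) (A : E →L[𝕜] F) (h : ∀ x, A (V x) = W (A x)) (y : F) :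
    adjoint A (W y) = V (adjoint A y) := by
  have h_symm (z : E) : W.symm (A z) = A (V.symm z) :=
    W.symm_apply_eq.mpr (by rw [← h, V.apply_symm_apply])
  refine ext_inner_right 𝕜 fun z => ?_
  rw [adjoint_inner_left, W.inner_map_eq_flip, h_symm, ← adjoint_inner_left,
    V.inner_map_eq_flip]

/-- Lifting an operator commuting with the representation to the averaged states:
the adjoint `A†` also commutes with the representation, preserves the `T`-invariance of
`Ψ`, and the dual action satisfies `η(A†Ψ)(Ψ') = η(Ψ)(AΨ')`. -/
theorem stmt_9 {G H : Type*} [Group G] [NormedAddCommGroup H] [InnerProductSpace ℂ H]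
    [CompleteSpace H]
    (U : G →* (H ≃ₗᵢ[ℂ] H)) (T : Subgroup G) (Ψ : H)
    (hΨ : ∀ t ∈ T, U t Ψ = Ψ)
    (A : H →L[ℂ] H)
    (hA : ∀ (f : G) (x : H), A ((U f) x) = (U f) (A x)) :
    (∀ (f : G) (x : H),
        (ContinuousLinearMap.adjoint A) ((U f) x) = (U f) ((ContinuousLinearMap.adjoint A) x)) ∧
    (∀ t ∈ T, U t ((ContinuousLinearMap.adjoint A) Ψ) = (ContinuousLinearMap.adjoint A) Ψ) ∧
    (∀ Ψ' : H,
      (Function.support fun q : G ⧸ T =>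
        inner (𝕜 := ℂ) ((U (Quotient.out q)) Ψ) (A Ψ')).Finite →
      (∑ᶠ q : G ⧸ T,
          inner (𝕜 := ℂ) ((U (Quotient.out q)) ((ContinuousLinearMap.adjoint A) Ψ)) Ψ') =
        ∑ᶠ q : G ⧸ T, inner (𝕜 := ℂ) ((U (Quotient.out q)) Ψ) (A Ψ')) := by
  have h_adjoint (f : G) (x : H) : adjoint A (U f x) = U f (adjoint A x) :=
    adjoint_apply_map_of_intertwines (U f) (U f) A (hA f) x
  refine ⟨h_adjoint, fun t ht => by rw [← h_adjoint, hΨ t ht], fun Ψ' _ => ?_⟩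
  exact finsum_congr fun q => by rw [← h_adjoint, adjoint_inner_left]
end
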